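/- arXiv:0808.0180 — 2 statements merged into one kernel-verified Lean document; each statement's English description precedes it below -/
import Mathlib

section
/- Let n be a positive integer. For all functions f and g in the complex linear span of {e_j : j ∈ Λ_n}, one has (1/(2n²)) · Σ_{k ∈ X_n} f(k/(2n)) · conj(g(k/(2n))) = ∫_{[−1/2,1/2]²} f(x) · conj(g(x)) dx. -/
open MeasureTheory Complex

attribute [local instance] Classical.propDecidable

/-- The exponential e_k(x) = exp(2 pi i (k1 x1 + k2 x2)). -/
noncomputable def e2 (k : ℤ × ℤ) (x : ℝ × ℝ) : ℂ :=
  Complex.exp (2 * Real.pi * Complex.I * ((k.1 : ℂ) * x.1 + (k.2 : ℂ) * x.2))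

/-- The point k/(2n) in the plane. -/
noncomputable def pt2 (n : ℕ) (k : ℤ × ℤ) : ℝ × ℝ :=
  ((k.1 : ℝ) / (2 * n), (k.2 : ℝ) / (2 * n))

/-- Λ_n = {j : -n ≤ j1+j2 < n and -n ≤ j2-j1 < n}. -/
noncomputable def Lam (n : ℕ) : Finset (ℤ × ℤ) :=
  (Finset.Icc (-(n : ℤ), -(n : ℤ)) ((n : ℤ), (n : ℤ))).filter
    fun j => -(n : ℤ) ≤ j.1 + j.2 ∧ j.1 + j.2 < (n : ℤ) ∧
      -(n : ℤ) ≤ j.2 - j.1 ∧ j.2 - j.1 < (n : ℤ)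

/-- X_n = {k : k1 ≡ k2 (mod 2), -n ≤ k_i < n}. -/
noncomputable def X2 (n : ℕ) : Finset (ℤ × ℤ) :=
  (Finset.Icc (-(n : ℤ), -(n : ℤ)) ((n : ℤ), (n : ℤ))).filter
    fun k => k.1 % 2 = k.2 % 2 ∧ k.1 < (n : ℤ) ∧ k.2 < (n : ℤ)

/-!
Both sides are sesquilinear in `(f, g)`, and `f * star g` lies in the span of the `e_m` with
`m ∈ Λ_n - Λ_n`, where `|m₁ + m₂| < 2n` and `|m₂ - m₁| < 2n`. So it suffices that the quadrature
rule is exact on each such `e_m`, i.e. that it returns `∫ e_m = if m = 0 then 1 else 0`.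

With `ζ = exp (2πi / 2n)` one has `e_m (k / 2n) = ζ ^ (m₁ k₁ + m₂ k₂)`, and the parity condition
defining `X_n` has indicator `(1 + (-1) ^ (k₁ + k₂)) / 2` with `-1 = ζ ^ n`. The sum over `X_n` is
therefore half the sum of two full geometric sums over the box `[-n, n)²`, at the frequencies `m`
and `m + (n, n)`. Such a sum vanishes unless `2n` divides both coordinates, which for `m` in the
diamond happens only when `m = 0`, and never for `m + (n, n)`.
-/

open Pointwise

theorem X2_eq_filter (n : ℕ) :
    X2 n = (Finset.Ico (-(n : ℤ)) n ×ˢ Finset.Ico (-(n : ℤ)) n).filter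
      (fun k => k.1 % 2 = k.2 % 2) := by
  ext k
  simp only [X2, Finset.mem_filter, Finset.mem_Icc, Finset.mem_product, Finset.mem_Ico,
    Prod.le_def]
  omega

section Field

variable {K : Type*} [Field K]

theorem Finset.sum_Ico_zpow_eq_ite {z : K} {N : ℕ} (hz : z ^ N = 1)
    (a : ℤ) : ∑ k ∈ Finset.Ico a (a + N), z ^ k = if z = 1 then (N : K) else 0 := by
  split_ifs with h1
  · simp [h1]
  rcases N.eq_zero_or_pos with rfl | hN
  · simp
  have hz0 : z ≠ 0 := by rintro rfl; simp [hN.ne'] at hz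
  have hshift : ∑ k ∈ Finset.Ico a (a + N), z ^ k = ∑ i ∈ Finset.range N, z ^ a * z ^ i := by
    refine Finset.sum_nbij' (fun k => (k - a).toNat) (fun i => a + i) ?_ ?_ ?_ ?_ ?_ <;>
      intro k hk <;> simp only [Finset.mem_Ico, Finset.mem_range] at hk ⊢ <;> try omega
    rw [← zpow_natCast, ← zpow_add₀ hz0]; congr 1; omega
  rw [hshift, ← Finset.mul_sum, geom_sum_eq h1, hz, sub_self, zero_div, mul_zero]

theorem IsPrimitiveRoot.sum_Ico_zpow_zpow {ζ : K} {N : ℕ}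
    (hζ : IsPrimitiveRoot ζ N) (a m : ℤ) :
    ∑ k ∈ Finset.Ico a (a + N), (ζ ^ m) ^ k = if (N : ℤ) ∣ m then (N : K) else 0 := by
  rw [Finset.sum_Ico_zpow_eq_ite (by rw [← zpow_natCast, ← zpow_mul, mul_comm, zpow_mul,
    zpow_natCast, hζ.pow_eq_one, one_zpow])]
  exact if_congr (hζ.zpow_eq_one_iff_dvd m) rfl rfl

theorem ite_emod_two_eq_eq [NeZero (2 : K)] (a b : ℤ) :
    (if a % 2 = b % 2 then 1 else 0 : K) = (1 + (-1) ^ (a + b)) / 2 := by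
  rcases Int.even_or_odd (a + b) with h | h
  · rw [h.neg_one_zpow, if_pos (by rw [Int.even_iff] at h; omega)]
    field_simp; norm_num
  · rw [h.neg_one_zpow, if_neg (by rw [Int.odd_iff] at h; omega)]
    ring

variable {ζ : K} {n : ℕ}

theorem IsPrimitiveRoot.sum_box_zpow (hζ : IsPrimitiveRoot ζ (2 * n)) (m : ℤ × ℤ) :
    ∑ k ∈ Finset.Ico (-(n : ℤ)) n ×ˢ Finset.Ico (-(n : ℤ)) n, ζ ^ (m.1 * k.1 + m.2 * k.2)
      = (if 2 * (n : ℤ) ∣ m.1 then (2 * n : K) else 0)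
        * (if 2 * (n : ℤ) ∣ m.2 then (2 * n : K) else 0) := by
  rcases n.eq_zero_or_pos with rfl | hn
  · simp
  have hIco : Finset.Ico (-(n : ℤ)) n = Finset.Ico (-(n : ℤ)) (-n + (2 * n : ℕ)) := by
    congr 1; push_cast; ring
  have h1d (a : ℤ) : ∑ k ∈ Finset.Ico (-(n : ℤ)) n, (ζ ^ a) ^ k
      = if 2 * (n : ℤ) ∣ a then (2 * n : K) else 0 := by
    rw [hIco, hζ.sum_Ico_zpow_zpow]; push_cast; rfl
  simp_rw [Finset.sum_product, zpow_add₀ (hζ.ne_zero (by positivity)), zpow_mul, ← Finset.mul_sum,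
    ← Finset.sum_mul, h1d]

theorem IsPrimitiveRoot.pow_eq_neg_one (hζ : IsPrimitiveRoot ζ (2 * n)) (hn : n ≠ 0) :
    ζ ^ n = -1 := by
  have h := hζ.pow_of_dvd hn (dvd_mul_left n 2)
  rw [Nat.mul_div_cancel _ (Nat.pos_of_ne_zero hn)] at h
  exact h.eq_neg_one_of_two_right

theorem IsPrimitiveRoot.sum_X2_zpow (hζ : IsPrimitiveRoot ζ (2 * n)) (hn : n ≠ 0)
    (m : ℤ × ℤ) :
    ∑ k ∈ X2 n, ζ ^ (m.1 * k.1 + m.2 * k.2)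
      = ((if 2 * (n : ℤ) ∣ m.1 then (2 * n : K) else 0)
          * (if 2 * (n : ℤ) ∣ m.2 then (2 * n : K) else 0)
        + (if 2 * (n : ℤ) ∣ m.1 + n then (2 * n : K) else 0)
          * (if 2 * (n : ℤ) ∣ m.2 + n then (2 * n : K) else 0)) / 2 := by
  have hneg : ζ ^ (n : ℤ) = -1 := by rw [zpow_natCast, hζ.pow_eq_neg_one hn]
  -- `-1 = ζ ^ n ≠ 1`, so the characteristic is not `2`
  have : NeZero (2 : K) := ⟨fun h2 => hζ.pow_ne_one_of_pos_of_lt (l := n) hn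
    (by omega) (by rw [hζ.pow_eq_neg_one hn]; linear_combination (-1 : K) * h2)⟩
  have hshift (k : ℤ × ℤ) : ζ ^ ((m.1 + n) * k.1 + (m.2 + n) * k.2)
      = ζ ^ (m.1 * k.1 + m.2 * k.2) * (-1) ^ (k.1 + k.2) := by
    rw [← hneg, ← zpow_mul, ← zpow_add₀ (hζ.ne_zero (by omega))]
    ring_nf
  have hbox := hζ.sum_box_zpow (m.1 + n, m.2 + n)
  dsimp only at hbox
  rw [← hζ.sum_box_zpow, ← hbox, X2_eq_filter, Finset.sum_filter,
    ← Finset.sum_add_distrib, Finset.sum_div]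
  refine Finset.sum_congr rfl fun k _ => ?_
  rw [← boole_mul, ite_emod_two_eq_eq, hshift]
  ring

end Field

def openDiamond (n : ℕ) : Set (ℤ × ℤ) :=
  {m | |m.1 + m.2| < 2 * n ∧ |m.2 - m.1| < 2 * n}

theorem Lam_sub_Lam_subset_openDiamond (n : ℕ) :
    (Lam n : Set (ℤ × ℤ)) - Lam n ⊆ openDiamond n := by
  rintro _ ⟨j, hj, l, hl, rfl⟩
  simp only [Lam, Finset.coe_filter, Set.mem_ofPred_eq] at hj hl
  simp only [openDiamond, Set.mem_ofPred_eq, Prod.fst_sub, Prod.snd_sub, abs_lt]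
  omega

section openDiamond

variable {n : ℕ} {m : ℤ × ℤ}

theorem eq_zero_of_mem_openDiamond (hm : m ∈ openDiamond n) (h1 : 2 * (n : ℤ) ∣ m.1)
    (h2 : 2 * (n : ℤ) ∣ m.2) : m = 0 := by
  have hsum := Int.eq_zero_of_abs_lt_dvd (dvd_add h1 h2) hm.1
  have hdiff := Int.eq_zero_of_abs_lt_dvd (dvd_sub h2 h1) hm.2
  ext <;> simp only [Prod.fst_zero, Prod.snd_zero] <;> omega

theorem not_dvd_add_of_mem_openDiamond (hm : m ∈ openDiamond n) :
    ¬(2 * (n : ℤ) ∣ m.1 + n ∧ 2 * (n : ℤ) ∣ m.2 + n) := by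
  rintro ⟨h1, h2⟩
  have hsum := Int.eq_zero_of_abs_lt_dvd
    (by simpa [add_add_add_comm, ← two_mul] using dvd_sub (dvd_add h1 h2) (dvd_refl _)) hm.1
  have hdiff := Int.eq_zero_of_abs_lt_dvd
    (by simpa using dvd_sub h2 h1) hm.2
  have hn : (0 : ℤ) < n := by have := hm.1; rw [abs_lt] at this; omega
  have := Int.le_of_dvd (by omega) (show 2 * (n : ℤ) ∣ m.1 + n from h1)
  omega

end openDiamond

theorem e2_pt2 (n : ℕ) (m k : ℤ × ℤ) :
    e2 m (pt2 n k) = exp (2 * Real.pi * I / (2 * n : ℕ)) ^ (m.1 * k.1 + m.2 * k.2) := by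
  rcases eq_or_ne n 0 with rfl | hn
  · simp [e2, pt2]
  rw [e2, pt2, ← exp_int_mul]
  congr 1
  push_cast
  field_simp

noncomputable def quadrature (n : ℕ) (h : ℝ × ℝ → ℂ) : ℂ :=
  1 / (2 * (n : ℂ) ^ 2) * ∑ k ∈ X2 n, h (pt2 n k)

theorem quadrature_add (n : ℕ) (f g : ℝ × ℝ → ℂ) :
    quadrature n (f + g) = quadrature n f + quadrature n g := by
  simp only [quadrature, Pi.add_apply, Finset.sum_add_distrib, mul_add]

theorem quadrature_smul (n : ℕ) (c : ℂ) (f : ℝ × ℝ → ℂ) :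
    quadrature n (c • f) = c * quadrature n f := by
  simp only [quadrature, Pi.smul_apply, smul_eq_mul, ← Finset.mul_sum, mul_left_comm _ c]

theorem quadrature_e2 {n : ℕ} {m : ℤ × ℤ} (hm : m ∈ openDiamond n) :
    quadrature n (e2 m) = if m = 0 then 1 else 0 := by
  have hn : n ≠ 0 := by rintro rfl; simpa using (abs_nonneg _).trans_lt hm.1
  have hζ := isPrimitiveRoot_exp (2 * n) (by positivity)
  have hdvd : 2 * (n : ℤ) ∣ m.1 ∧ 2 * (n : ℤ) ∣ m.2 ↔ m = 0 :=
    ⟨fun h => eq_zero_of_mem_openDiamond hm h.1 h.2, by rintro rfl; simp⟩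
  simp only [quadrature, e2_pt2, hζ.sum_X2_zpow hn, ite_zero_mul_ite_zero, hdvd,
    if_neg (not_dvd_add_of_mem_openDiamond hm)]
  split_ifs <;> field_simp <;> ring

theorem integral_Icc_exp_two_pi_I_int_mul (a : ℤ) :
    ∫ t in Set.Icc (-(1 : ℝ) / 2) (1 / 2), exp (2 * Real.pi * I * a * t)
      = if a = 0 then 1 else 0 := by
  rw [integral_Icc_eq_integral_Ioc, ← intervalIntegral.integral_of_le (by norm_num)]
  split_ifs with ha
  · norm_num [ha]
  have hc : 2 * Real.pi * I * a ≠ 0 := by simp [Real.pi_ne_zero, ha]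
  rw [integral_exp_mul_complex hc, div_eq_zero_iff, sub_eq_zero, exp_eq_exp_iff_exists_int]
  exact Or.inl ⟨a, by push_cast; ring⟩

theorem e2_eq_mul (m : ℤ × ℤ) (x : ℝ × ℝ) :
    e2 m x = exp (2 * Real.pi * I * m.1 * x.1) * exp (2 * Real.pi * I * m.2 * x.2) := by
  rw [e2, ← exp_add]
  ring_nf

theorem integral_e2 (m : ℤ × ℤ) :
    ∫ x in Set.Icc ((-(1:ℝ)/2, -(1:ℝ)/2)) (((1:ℝ)/2, (1:ℝ)/2)), e2 m x
      = if m = 0 then 1 else 0 := by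
  simp_rw [e2_eq_mul]
  rw [Set.Icc_prod_eq, Measure.volume_eq_prod, setIntegral_prod_mul
    (fun t : ℝ => exp (2 * Real.pi * I * m.1 * t)) (fun t : ℝ => exp (2 * Real.pi * I * m.2 * t)),
    integral_Icc_exp_two_pi_I_int_mul, integral_Icc_exp_two_pi_I_int_mul, ite_zero_mul_ite_zero,
    one_mul]
  simp [Prod.ext_iff]

theorem continuous_e2 (m : ℤ × ℤ) : Continuous (e2 m) := by
  unfold e2
  fun_prop

theorem e2_mul_star (j l : ℤ × ℤ) : e2 j * star (e2 l) = e2 (j - l) := by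
  funext x
  rw [Pi.mul_apply, Pi.star_apply, e2, e2, e2, star_def, ← exp_conj, ← exp_add]
  congr 1
  simp only [map_mul, map_add, conj_I, conj_ofReal, map_ofNat, map_intCast, Prod.fst_sub,
    Prod.snd_sub]
  push_cast
  ring

theorem continuous_of_mem_span_e2 {S : Set (ℤ × ℤ)} {f : ℝ × ℝ → ℂ}
    (hf : f ∈ Submodule.span ℂ (e2 '' S)) : Continuous f := by
  induction hf using Submodule.span_induction with
  | mem _ hx => obtain ⟨m, -, rfl⟩ := hx; exact continuous_e2 m
  | zero => exact continuous_const
  | add _ _ _ _ hf hg => exact hf.add hg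
  | smul c _ _ hf => exact hf.const_smul c

theorem mul_star_mem_span_e2 {A B : Set (ℤ × ℤ)} {f g : ℝ × ℝ → ℂ}
    (hf : f ∈ Submodule.span ℂ (e2 '' A)) (hg : g ∈ Submodule.span ℂ (e2 '' B)) :
    f * star g ∈ Submodule.span ℂ (e2 '' (A - B)) := by
  induction hf using Submodule.span_induction with
  | mem _ hx =>
    obtain ⟨j, hj, rfl⟩ := hx
    induction hg using Submodule.span_induction with
    | mem _ hy =>
      obtain ⟨l, hl, rfl⟩ := hy
      rw [e2_mul_star]
      exact Submodule.subset_span ⟨j - l, Set.sub_mem_sub hj hl, rfl⟩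
    | zero => simp
    | add _ _ _ _ h₁ h₂ => rw [star_add, mul_add]; exact add_mem h₁ h₂
    | smul c _ _ h => rw [star_smul, mul_smul_comm]; exact Submodule.smul_mem _ _ h
  | zero => simp
  | add _ _ _ _ h₁ h₂ => rw [add_mul]; exact add_mem h₁ h₂
  | smul c _ _ h => rw [smul_mul_assoc]; exact Submodule.smul_mem _ c h

theorem quadrature_eq_integral_of_mem_span {n : ℕ} {h : ℝ × ℝ → ℂ}
    (hh : h ∈ Submodule.span ℂ (e2 '' openDiamond n)) :
    quadrature n h = ∫ x in Set.Icc ((-(1:ℝ)/2, -(1:ℝ)/2)) (((1:ℝ)/2, (1:ℝ)/2)), h x := by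
  induction hh using Submodule.span_induction with
  | mem _ hx => obtain ⟨m, hm, rfl⟩ := hx; rw [quadrature_e2 hm, integral_e2]
  | zero => simp [quadrature]
  | add f g hf hg ihf ihg =>
    rw [quadrature_add, ihf, ihg]
    exact (integral_add (continuous_of_mem_span_e2 hf).integrableOn_Icc
      (continuous_of_mem_span_e2 hg).integrableOn_Icc).symm
  | smul c f _ ih => rw [quadrature_smul, ih]; exact (integral_const_mul c f).symm

theorem discrete_inner_product_eq_integral_2d_general (n : ℕ)
    (f g : ℝ × ℝ → ℂ)
    (hf : f ∈ Submodule.span ℂ (e2 '' (Lam n : Set (ℤ × ℤ))))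
    (hg : g ∈ Submodule.span ℂ (e2 '' (Lam n : Set (ℤ × ℤ)))) :
    (1 / (2 * (n : ℂ) ^ 2)) * ∑ k ∈ X2 n, f (pt2 n k) * star (g (pt2 n k))
      = ∫ x in Set.Icc ((-(1:ℝ)/2, -(1:ℝ)/2)) (((1:ℝ)/2, (1:ℝ)/2)), f x * star (g x) :=
  quadrature_eq_integral_of_mem_span <| Submodule.span_mono
    (Set.image_mono (Lam_sub_Lam_subset_openDiamond n)) (mul_star_mem_span_e2 hf hg)

theorem discrete_inner_product_eq_integral_2d (n : ℕ) (hn : 0 < n)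
    (f g : ℝ × ℝ → ℂ)
    (hf : f ∈ Submodule.span ℂ (e2 '' (Lam n : Set (ℤ × ℤ))))
    (hg : g ∈ Submodule.span ℂ (e2 '' (Lam n : Set (ℤ × ℤ)))) :
    (1 / (2 * (n : ℂ) ^ 2)) * ∑ k ∈ X2 n, f (pt2 n k) * star (g (pt2 n k))
      = ∫ x in Set.Icc ((-(1:ℝ)/2, -(1:ℝ)/2)) (((1:ℝ)/2, (1:ℝ)/2)), f x * star (g x) :=
  discrete_inner_product_eq_integral_2d_general n f g hf hg
end

section
/- Let n be a positive integer. For every assignment of real values y_k, one for each k ∈ Ξ_n, there exists a real polynomial p in two variables of total degree at most n such that p(cos(k₁π/n), cos(k₂π/n)) = y_k for every k ∈ Ξ_n. -/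
attribute [local instance] Classical.propDecidable

/-- Ξ_n = {k : 0 ≤ k_i ≤ n, k1 ≡ k2 (mod 2)}. -/
noncomputable def Xi2 (n : ℕ) : Finset (ℤ × ℤ) :=
  (Finset.Icc ((0 : ℤ), (0 : ℤ)) ((n : ℤ), (n : ℤ))).filter
    fun k => k.1 % 2 = k.2 % 2

/-!
Write a point of `Ξ_n` as `(s + d, s - d)`; it is then `(cos (u + v), cos (u - v))` with
`u = sπ/n`, `v = dπ/n`. By product-to-sum, for `J + K = 2p`,
`T_J(cos u) T_K(cos v) + T_K(cos u) T_J(cos v)` is the value there of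
`T_p(x) T_q(y) + T_q(x) T_p(y)`, `q = J - p`, which has total degree `max J K`; for `J + K` odd,
averaging over `(u, v) ↦ (u + π, v + π)` kills it. By bilinearity, for univariate `P, Q` of degree
`≤ m`, `P(a) Q(b) + Q(a) P(b) + P(-a) Q(-b) + Q(-a) P(-b)` at `(a, b) = (cos u, cos v)` is the
value of a bivariate polynomial of total degree `≤ m`.

Taking for `P, Q` the Lagrange basis polynomials at `s` and `|d|` for the nodes `cos (iπ/n)`,
`0 ≤ i ≤ n`, gives a polynomial of degree `≤ n` that vanishes on `Ξ_n` except at `k` and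
`k.swap`, where it takes the same nonzero value. The nodes with `1 ≤ i ≤ n - 1` give degree
`≤ n - 2`, and multiplying by `x - y` then makes the two values opposite; the sum of the two
polynomials, suitably scaled, is the fundamental polynomial of `k`.
-/

open Polynomial Real

namespace MvPolynomial

variable {σ ι κ R : Type*} [CommSemiring R]

noncomputable def valuesOfTotalDegreeLE (x : ι → σ → R) (m : ℕ) : Submodule R (ι → R) :=
  (restrictTotalDegree σ R m).map (LinearMap.pi fun i => (aeval (x i)).toLinearMap)

variable {x : ι → σ → R} {m : ℕ} {f : ι → R}

lemma mem_valuesOfTotalDegreeLE : f ∈ valuesOfTotalDegreeLE x m ↔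
    ∃ p : MvPolynomial σ R, p.totalDegree ≤ m ∧ ∀ i, eval (x i) p = f i := by
  simp only [valuesOfTotalDegreeLE, Submodule.mem_map, mem_restrictTotalDegree]
  exact exists_congr fun p => and_congr_right fun _ => _root_.funext_iff

lemma valuesOfTotalDegreeLE_mono {m' : ℕ} (h : m ≤ m') :
    valuesOfTotalDegreeLE x m ≤ valuesOfTotalDegreeLE x m' := fun f hf => by
  obtain ⟨p, hp, hpf⟩ := mem_valuesOfTotalDegreeLE.1 hf
  exact mem_valuesOfTotalDegreeLE.2 ⟨p, hp.trans h, hpf⟩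

lemma comp_mem_valuesOfTotalDegreeLE {y : κ → σ → R} {φ : κ → ι} (hy : ∀ k, y k = x (φ k))
    (hf : f ∈ valuesOfTotalDegreeLE x m) : f ∘ φ ∈ valuesOfTotalDegreeLE y m := by
  obtain ⟨p, hp, hpf⟩ := mem_valuesOfTotalDegreeLE.1 hf
  exact mem_valuesOfTotalDegreeLE.2 ⟨p, hp, fun k => by simp [hy, hpf]⟩

lemma mul_mem_valuesOfTotalDegreeLE (q : MvPolynomial σ R) (hf : f ∈ valuesOfTotalDegreeLE x m) :
    (fun i => eval (x i) q * f i) ∈ valuesOfTotalDegreeLE x (q.totalDegree + m) := by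
  obtain ⟨p, hp, hpf⟩ := mem_valuesOfTotalDegreeLE.1 hf
  exact mem_valuesOfTotalDegreeLE.2
    ⟨q * p, (totalDegree_mul q p).trans (by omega), fun i => by simp [hpf]⟩

lemma valuesOfTotalDegreeLE_eq_top [Fintype ι] [DecidableEq ι]
    (h : ∀ i, Pi.single i 1 ∈ valuesOfTotalDegreeLE x m) : valuesOfTotalDegreeLE x m = ⊤ := by
  rw [eq_top_iff, ← (Pi.basisFun R ι).span_eq, Submodule.span_le]
  rintro _ ⟨i, rfl⟩
  simpa using h i

lemma totalDegree_toMvPolynomial_le [Nontrivial R] (P : R[X]) (i : σ) :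
    (P.toMvPolynomial i).totalDegree ≤ P.natDegree := by
  rw [toMvPolynomial, aeval_eq_sum_range]
  refine (totalDegree_finsetSum _ _).trans (Finset.sup_le fun j hj => ?_)
  refine (totalDegree_smul_le _ _).trans ?_
  simpa [totalDegree_X_pow, Nat.lt_succ_iff] using hj

end MvPolynomial

open MvPolynomial

namespace Polynomial

def symmProd {R : Type*} [CommRing R] (P Q : R[X]) (a b : R) : R :=
  P.eval a * Q.eval b + Q.eval a * P.eval b + P.eval (-a) * Q.eval (-b) + Q.eval (-a) * P.eval (-b)

namespace Chebyshev

noncomputable def symmProdCos : ℝ[X] →ₗ[ℝ] ℝ[X] →ₗ[ℝ] ℝ × ℝ → ℝ :=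
  LinearMap.mk₂ ℝ (fun P Q uv => symmProd P Q (cos uv.1) (cos uv.2))
    (fun _ _ _ => by ext; simp only [symmProd, eval_add, Pi.add_apply]; ring)
    (fun _ _ _ => by ext; simp only [symmProd, eval_smul, smul_eq_mul, Pi.smul_apply]; ring)
    (fun _ _ _ => by ext; simp only [symmProd, eval_add, Pi.add_apply]; ring)
    (fun _ _ _ => by ext; simp only [symmProd, eval_smul, smul_eq_mul, Pi.smul_apply]; ring)

lemma symmProdCos_apply (P Q : ℝ[X]) (u v : ℝ) :
    symmProdCos P Q (u, v) = symmProd P Q (cos u) (cos v) := rfl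

noncomputable def cosSumSub (uv : ℝ × ℝ) : Fin 2 → ℝ := ![cos (uv.1 + uv.2), cos (uv.1 - uv.2)]

noncomputable def symmProdT (p q : ℤ) : MvPolynomial (Fin 2) ℝ :=
  (T ℝ p).toMvPolynomial 0 * (T ℝ q).toMvPolynomial 1 +
    (T ℝ q).toMvPolynomial 0 * (T ℝ p).toMvPolynomial 1

lemma totalDegree_symmProdT_le (p q : ℤ) :
    (symmProdT p q).totalDegree ≤ p.natAbs + q.natAbs := by
  have h (p q : ℤ) : ((T ℝ p).toMvPolynomial (0 : Fin 2) *
      (T ℝ q).toMvPolynomial 1).totalDegree ≤ p.natAbs + q.natAbs := by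
    refine (totalDegree_mul _ _).trans (add_le_add ?_ ?_) <;>
      exact (totalDegree_toMvPolynomial_le _ _).trans (natDegree_T ℝ _).le
  exact (totalDegree_add _ _).trans (max_le (h p q) ((h q p).trans_eq (add_comm _ _)))

lemma eval_cosSumSub_symmProdT (p q : ℤ) (u v : ℝ) :
    MvPolynomial.eval (cosSumSub (u, v)) (symmProdT p q) =
      cos ((p + q : ℤ) * u) * cos ((p - q : ℤ) * v) +
        cos ((p - q : ℤ) * u) * cos ((p + q : ℤ) * v) := by
  simp only [symmProdT, cosSumSub, map_add, map_mul, eval_toMvPolynomial, Matrix.cons_val_zero,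
    Matrix.cons_val_one, T_real_cos]
  push_cast
  simp only [add_mul, sub_mul, mul_add, mul_sub, cos_add, cos_sub]
  ring

lemma symmProdCos_T_mem (J K : ℕ) :
    symmProdCos (T ℝ J) (T ℝ K) ∈ valuesOfTotalDegreeLE cosSumSub (max J K) := by
  have hsymm : symmProdCos (T ℝ J) (T ℝ K) = fun uv => (1 + (-1 : ℝ) ^ (J + K)) *
      (cos (J * uv.1) * cos (K * uv.2) + cos (K * uv.1) * cos (J * uv.2)) := by
    ext ⟨u, v⟩
    simp only [symmProdCos_apply, symmProd, T_eval_neg, T_real_cos, Int.cast_negOnePow_natCast]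
    push_cast
    ring
  rcases Nat.even_or_odd (J + K) with ⟨p, hp⟩ | hodd
  · refine mem_valuesOfTotalDegreeLE.2 ⟨2 • symmProdT p ((J : ℤ) - p), ?_, fun uv => ?_⟩
    · refine (totalDegree_smul_le _ _).trans ((totalDegree_symmProdT_le _ _).trans ?_)
      omega
    · rw [hsymm, map_nsmul, eval_cosSumSub_symmProdT, hp, Even.neg_one_pow ⟨p, rfl⟩,
        show (p : ℤ) + ((J : ℤ) - p) = J by ring, show (p : ℤ) - ((J : ℤ) - p) = K by omega]
      push_cast
      ring
  · convert zero_mem (valuesOfTotalDegreeLE cosSumSub (max J K))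
    ext uv
    simp [hsymm, hodd.neg_one_pow]

lemma symmProdCos_mem {m : ℕ} {P Q : ℝ[X]} (hP : P ∈ degreeLE ℝ m) (hQ : Q ∈ degreeLE ℝ m) :
    symmProdCos P Q ∈ valuesOfTotalDegreeLE cosSumSub m := by
  rw [← Sequence.span_degreeLE (chebyshevTsequence ℝ) (by simp)] at hP hQ
  have := Submodule.apply_mem_map₂ symmProdCos hP hQ
  rw [Submodule.map₂_span_span] at this
  refine Submodule.span_le.2 ?_ this
  rintro _ ⟨_, ⟨J, hJ, rfl⟩, _, ⟨K, hK, rfl⟩, rfl⟩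
  exact valuesOfTotalDegreeLE_mono (max_le hJ hK) (symmProdCos_T_mem J K)

end Chebyshev

end Polynomial

open Polynomial.Chebyshev

namespace Xi2

variable {n r : ℕ}

noncomputable def node (n : ℕ) (i : ℤ) : ℝ := cos (i * π / n)

lemma node_neg (n : ℕ) (i : ℤ) : node n (-i) = node n i := by
  simp [node, neg_mul, neg_div]

lemma node_natAbs (n : ℕ) (i : ℤ) : node n i.natAbs = node n i := by
  rcases Int.natAbs_eq i with h | h <;> rw [h] <;> simp [node_neg]

lemma node_sub (hn : 0 < n) (i : ℤ) : node n (n - i) = -node n i := by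
  rw [node, node, ← cos_pi_sub]
  congr 1
  field_simp
  push_cast
  ring

lemma node_injOn (hn : 0 < n) : Set.InjOn (node n) (Set.Icc 0 n) := by
  have hmaps : ∀ i ∈ Set.Icc (0 : ℤ) n, (i : ℝ) * π / n ∈ Set.Icc 0 π := fun i ⟨h0, hn'⟩ => by
    have : (i : ℝ) ≤ n := by exact_mod_cast hn'
    constructor
    · have : (0 : ℝ) ≤ i := by exact_mod_cast h0
      positivity
    · rw [div_le_iff₀ (by positivity)]
      nlinarith [pi_pos]
  intro i hi j hj h
  have := injOn_cos (hmaps i hi) (hmaps j hj) h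
  field_simp at this
  exact_mod_cast this

noncomputable def lagrangeBasis (n r : ℕ) (a : ℤ) : ℝ[X] :=
  Lagrange.basis (Finset.Icc (r : ℤ) (n - r)) (node n) a

variable {a b s e : ℤ}

lemma node_injOn_Icc (hn : 0 < n) (r : ℕ) :
    Set.InjOn (node n) (Finset.Icc (r : ℤ) (n - r) : Set ℤ) :=
  (node_injOn hn).mono fun i => by simp only [Finset.coe_Icc, Set.mem_Icc]; omega

lemma eval_lagrangeBasis_node (hn : 0 < n) (ha : r ≤ a ∧ a ≤ n - r) (hs : r ≤ s ∧ s ≤ n - r) :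
    (lagrangeBasis n r a).eval (node n s) = if s = a then 1 else 0 := by
  split_ifs with h
  · subst h
    exact Lagrange.eval_basis_self (node_injOn_Icc hn r) (Finset.mem_Icc.2 ha)
  · exact Lagrange.eval_basis_of_ne (Ne.symm h) (Finset.mem_Icc.2 hs)

lemma lagrangeBasis_mem_degreeLE (hn : 0 < n) (ha : r ≤ a ∧ a ≤ n - r) :
    lagrangeBasis n r a ∈ degreeLE ℝ (n - 2 * r : ℕ) := by
  rw [mem_degreeLE]
  refine degree_le_of_natDegree_le ?_
  rw [lagrangeBasis, Lagrange.natDegree_basis (node_injOn_Icc hn r) (Finset.mem_Icc.2 ha),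
    Int.card_Icc]
  omega

lemma symmProd_lagrangeBasis_node (hn : 0 < n) (hab : r ≤ b ∧ b ≤ a ∧ a + b ≤ n)
    (hse : r ≤ e ∧ e ≤ s ∧ s + e ≤ n) :
    symmProd (lagrangeBasis n r a) (lagrangeBasis n r b) (node n s) (node n e) =
      (if s = a then 1 else 0) * (if e = b then 1 else 0) +
      (if s = b then 1 else 0) * (if e = a then 1 else 0) +
      (if n - s = a then 1 else 0) * (if n - e = b then 1 else 0) +
      (if n - s = b then 1 else 0) * (if n - e = a then 1 else 0) := by
  -- `-node n i = node n (n - i)`, and `{r, …, n - r}` is closed under `i ↦ n - i`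
  simp (disch := omega) only [symmProd, ← node_sub hn, eval_lagrangeBasis_node hn]

lemma symmProd_lagrangeBasis_node_eq_ite (hn : 0 < n) (hab : r ≤ b ∧ b ≤ a ∧ a + b ≤ n)
    (hse : r ≤ e ∧ e ≤ s ∧ s + e ≤ n) :
    symmProd (lagrangeBasis n r a) (lagrangeBasis n r b) (node n s) (node n e) =
      if s = a ∧ e = b then
        symmProd (lagrangeBasis n r a) (lagrangeBasis n r b) (node n a) (node n b) else 0 := by
  split_ifs with h
  · rw [h.1, h.2]
  · rw [symmProd_lagrangeBasis_node hn hab hse]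
    split_ifs <;> first | omega | simp

lemma one_le_symmProd_lagrangeBasis_node (hn : 0 < n) (hab : r ≤ b ∧ b ≤ a ∧ a + b ≤ n) :
    1 ≤ symmProd (lagrangeBasis n r a) (lagrangeBasis n r b) (node n a) (node n b) := by
  rw [symmProd_lagrangeBasis_node hn hab hab]
  split_ifs <;> first | omega | norm_num

lemma mem_iff {k : ℤ × ℤ} :
    k ∈ Xi2 n ↔ (0 ≤ k.1 ∧ k.1 ≤ n) ∧ (0 ≤ k.2 ∧ k.2 ≤ n) ∧ k.1 % 2 = k.2 % 2 := by
  simp only [Xi2, Finset.mem_filter, Finset.mem_Icc, Prod.le_def]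
  tauto

lemma mid_eq_and_halfDiff_natAbs_eq_iff {k l : ℤ × ℤ} (hk : k.1 % 2 = k.2 % 2)
    (hl : l.1 % 2 = l.2 % 2) :
    ((l.1 + l.2) / 2 = (k.1 + k.2) / 2 ∧
      (((l.1 - l.2) / 2).natAbs : ℤ) = ((k.1 - k.2) / 2).natAbs) ↔ l = k ∨ l = k.swap := by
  rw [Prod.ext_iff, Prod.ext_iff, Prod.fst_swap, Prod.snd_swap]
  omega

noncomputable def point (n : ℕ) (l : Xi2 n) : Fin 2 → ℝ :=
  ![cos (l.1.1 * π / n), cos (l.1.2 * π / n)]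

/-- `(u, v) = (sπ/n, dπ/n)` where `l = (s + d, s - d)`. -/
noncomputable def angles (n : ℕ) (l : ℤ × ℤ) : ℝ × ℝ :=
  ((((l.1 + l.2) / 2 : ℤ) : ℝ) * π / n, (((l.1 - l.2) / 2 : ℤ) : ℝ) * π / n)

lemma point_eq_cosSumSub (l : Xi2 n) : point n l = cosSumSub (angles n l) := by
  have hl := (mem_iff.1 l.2).2.2
  have h1 : ((((l.1.1 + l.1.2) / 2 : ℤ) : ℝ) + (((l.1.1 - l.1.2) / 2 : ℤ) : ℝ)) = l.1.1 := by
    exact_mod_cast (by omega : (l.1.1 + l.1.2) / 2 + (l.1.1 - l.1.2) / 2 = l.1.1)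
  have h2 : ((((l.1.1 + l.1.2) / 2 : ℤ) : ℝ) - (((l.1.1 - l.1.2) / 2 : ℤ) : ℝ)) = l.1.2 := by
    exact_mod_cast (by omega : (l.1.1 + l.1.2) / 2 - (l.1.1 - l.1.2) / 2 = l.1.2)
  rw [point, cosSumSub, angles, ← add_div, ← add_mul, h1, ← sub_div, ← sub_mul, h2]

lemma symmProdCos_lagrangeBasis_angles (hn : 0 < n) (hab : r ≤ b ∧ b ≤ a ∧ a + b ≤ n)
    {l : ℤ × ℤ} (hl : l ∈ Xi2 n) (hrl : r ≤ ((l.1 - l.2) / 2).natAbs) :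
    symmProdCos (lagrangeBasis n r a) (lagrangeBasis n r b) (angles n l) =
      if (l.1 + l.2) / 2 = a ∧ (((l.1 - l.2) / 2).natAbs : ℤ) = b then
        symmProd (lagrangeBasis n r a) (lagrangeBasis n r b) (node n a) (node n b) else 0 := by
  rw [mem_iff] at hl
  rw [angles, symmProdCos_apply]
  rw [show cos ((((l.1 - l.2) / 2 : ℤ) : ℝ) * π / n) = node n ((l.1 - l.2) / 2).natAbs from
    (node_natAbs _ _).symm]
  exact symmProd_lagrangeBasis_node_eq_ite hn hab ⟨by omega, by omega, by omega⟩

variable {k l : ℤ × ℤ}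

noncomputable def bump (n r : ℕ) (k l : ℤ × ℤ) : ℝ :=
  symmProdCos (lagrangeBasis n r ((k.1 + k.2) / 2)) (lagrangeBasis n r ((k.1 - k.2) / 2).natAbs)
    (angles n l)

lemma bump_self (hn : 0 < n) (hk : k ∈ Xi2 n) (hrk : r ≤ ((k.1 - k.2) / 2).natAbs) :
    bump n r k k = symmProd (lagrangeBasis n r ((k.1 + k.2) / 2))
      (lagrangeBasis n r ((k.1 - k.2) / 2).natAbs) (node n ((k.1 + k.2) / 2))
      (node n ((k.1 - k.2) / 2).natAbs) := by
  have hk' := mem_iff.1 hk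
  rw [bump, symmProdCos_lagrangeBasis_angles hn (by omega) hk hrk, if_pos ⟨rfl, rfl⟩]

lemma one_le_bump_self (hn : 0 < n) (hk : k ∈ Xi2 n) (hrk : r ≤ ((k.1 - k.2) / 2).natAbs) :
    1 ≤ bump n r k k := by
  have hk' := mem_iff.1 hk
  rw [bump_self hn hk hrk]
  exact one_le_symmProd_lagrangeBasis_node hn (by omega)

lemma bump_apply (hn : 0 < n) (hk : k ∈ Xi2 n) (hl : l ∈ Xi2 n)
    (hrk : r ≤ ((k.1 - k.2) / 2).natAbs) (hrl : r ≤ ((l.1 - l.2) / 2).natAbs) :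
    bump n r k l = if l = k ∨ l = k.swap then bump n r k k else 0 := by
  have hk' := mem_iff.1 hk
  rw [bump_self hn hk hrk, bump, symmProdCos_lagrangeBasis_angles hn (by omega) hl hrl,
    if_congr (mid_eq_and_halfDiff_natAbs_eq_iff hk'.2.2 (mem_iff.1 hl).2.2) rfl rfl]

lemma bump_mem (hn : 0 < n) (k : Xi2 n) (hrk : r ≤ ((k.1.1 - k.1.2) / 2).natAbs) :
    (fun l : Xi2 n => bump n r k l) ∈ valuesOfTotalDegreeLE (point n) (n - 2 * r) := by
  have hk := mem_iff.1 k.2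
  exact comp_mem_valuesOfTotalDegreeLE (φ := angles n ∘ Subtype.val) point_eq_cosSumSub
    (symmProdCos_mem (lagrangeBasis_mem_degreeLE hn ⟨by omega, by omega⟩)
      (lagrangeBasis_mem_degreeLE hn ⟨by omega, by omega⟩))

lemma pairIndicator_mem (hn : 0 < n) (k : Xi2 n) :
    (fun l : Xi2 n => if l.1 = k.1 ∨ l.1 = k.1.swap then (1 : ℝ) else 0) ∈
      valuesOfTotalDegreeLE (point n) n := by
  have hbump : (fun l : Xi2 n => bump n 0 k l) = bump n 0 k k • fun l : Xi2 n =>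
      if l.1 = k.1 ∨ l.1 = k.1.swap then (1 : ℝ) else 0 := by
    funext l
    rw [bump_apply hn k.2 l.2 (Nat.zero_le _) (Nat.zero_le _), Pi.smul_apply, smul_eq_mul,
      mul_ite, mul_one, mul_zero]
  have hmem := bump_mem hn k (Nat.zero_le _)
  rw [hbump, Nat.mul_zero, Nat.sub_zero] at hmem
  have hC := one_le_bump_self hn k.2 (Nat.zero_le _)
  exact (Submodule.smul_mem_iff _ (by positivity)).1 hmem

lemma node_sub_node_mul_bump (hn : 0 < n) (hk : k ∈ Xi2 n) (hl : l ∈ Xi2 n) (hk₀ : k.1 ≠ k.2) :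
    (node n l.1 - node n l.2) * bump n 1 k l = bump n 1 k k * (node n k.1 - node n k.2) *
      ((if l = k then 1 else 0) - (if l = k.swap then 1 else 0)) := by
  have hk' := mem_iff.1 hk
  have hl' := mem_iff.1 hl
  have hswap : k ≠ k.swap := fun h => hk₀ (congrArg Prod.fst h)
  by_cases hl₀ : l.1 = l.2
  · have h₁ : l ≠ k := fun h => hk₀ (h ▸ hl₀)
    have h₂ : l ≠ k.swap := fun h => hk₀ (h ▸ hl₀).symm
    simp [hl₀, h₁, h₂]
  rw [bump_apply hn hk hl (by omega) (by omega)]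
  by_cases h₁ : l = k
  · rw [h₁, if_pos (Or.inl rfl), if_pos rfl, if_neg hswap]
    ring
  by_cases h₂ : l = k.swap
  · rw [h₂, if_pos (Or.inr rfl), if_neg hswap.symm, if_pos rfl, Prod.fst_swap, Prod.snd_swap]
    ring
  · rw [if_neg (not_or.2 ⟨h₁, h₂⟩), if_neg h₁, if_neg h₂]
    ring

lemma pairAntiIndicator_mem (hn : 0 < n) (k : Xi2 n) (hk₀ : k.1.1 ≠ k.1.2) :
    (fun l : Xi2 n => (if l.1 = k.1 then (1 : ℝ) else 0) - (if l.1 = k.1.swap then 1 else 0)) ∈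
      valuesOfTotalDegreeLE (point n) n := by
  have hk := mem_iff.1 k.2
  have hrk : 1 ≤ ((k.1.1 - k.1.2) / 2).natAbs := by omega
  have hw : node n k.1.1 - node n k.1.2 ≠ 0 :=
    sub_ne_zero.2 fun h => hk₀ (node_injOn hn ⟨hk.1.1, hk.1.2⟩ ⟨hk.2.1.1, hk.2.1.2⟩ h)
  have hvalues : (fun l : Xi2 n => eval (point n l) (X 0 - X 1) * bump n 1 k l) =
      (bump n 1 k k * (node n k.1.1 - node n k.1.2)) • fun l : Xi2 n =>
        (if l.1 = k.1 then (1 : ℝ) else 0) - (if l.1 = k.1.swap then 1 else 0) := by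
    funext l
    rw [Pi.smul_apply, smul_eq_mul, ← node_sub_node_mul_bump hn k.2 l.2 hk₀]
    simp [point, node]
  have hmem := mul_mem_valuesOfTotalDegreeLE (X 0 - X 1) (bump_mem hn k hrk)
  rw [hvalues] at hmem
  have hdeg : (X 0 - X 1 : MvPolynomial (Fin 2) ℝ).totalDegree ≤ 1 :=
    (totalDegree_sub _ _).trans (by simp [totalDegree_X])
  have hC := one_le_bump_self hn k.2 hrk
  exact (Submodule.smul_mem_iff _ (mul_ne_zero (by positivity) hw)).1
    (valuesOfTotalDegreeLE_mono (by omega) hmem)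

lemma single_mem (hn : 0 < n) (k : Xi2 n) :
    Pi.single k 1 ∈ valuesOfTotalDegreeLE (point n) n := by
  by_cases hk₀ : k.1.1 = k.1.2
  · have hswap : k.1.swap = k.1 := Prod.ext hk₀.symm hk₀
    convert pairIndicator_mem hn k using 1
    funext l
    simp only [hswap, or_self, Pi.single_apply, Subtype.ext_iff]
  · convert Submodule.smul_mem _ (2⁻¹ : ℝ)
      (add_mem (pairIndicator_mem hn k) (pairAntiIndicator_mem hn k hk₀)) using 1
    funext l
    have hswap : k.1 ≠ k.1.swap := fun h => hk₀ (congrArg Prod.fst h)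
    simp only [Pi.single_apply, Subtype.ext_iff, Pi.smul_apply, Pi.add_apply, smul_eq_mul]
    by_cases h₁ : l.1 = k.1
    · simp only [h₁, if_pos, true_or, if_neg hswap]
      norm_num
    · by_cases h₂ : l.1 = k.1.swap
      · simp only [h₂, if_pos, or_true, if_neg hswap.symm]
        norm_num
      · simp only [h₁, h₂, or_self, if_false]
        norm_num

end Xi2

theorem polynomial_interpolation_exists_2d (n : ℕ) (hn : 0 < n) (y : ℤ × ℤ → ℝ) :
    ∃ p : MvPolynomial (Fin 2) ℝ, p.totalDegree ≤ n ∧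
      ∀ k ∈ Xi2 n,
        MvPolynomial.eval
          ![Real.cos (k.1 * Real.pi / n), Real.cos (k.2 * Real.pi / n)] p = y k := by
  have htop := valuesOfTotalDegreeLE_eq_top (Xi2.single_mem hn)
  obtain ⟨p, hp, hpy⟩ :=
    mem_valuesOfTotalDegreeLE.1 (htop ▸ Submodule.mem_top : (fun k : Xi2 n => y k) ∈ _)
  exact ⟨p, hp, fun k hk => hpy ⟨k, hk⟩⟩
end
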